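/- Let f = (f11, f12, f22) ∈ C²_c(S²; D1). If L⁰ f (= Lf), L¹ f, and Mf all vanish identically on ℝ², then f11 ≡ f12 ≡ f22 ≡ 0. (A symmetric 2-tensor field is uniquely determined by its longitudinal V-line transform, the first moment longitudinal V-line transform, and its mixed V-line transform.) -/

import Mathlib

noncomputable section

open MeasureTheory

/-- The divergent beam transform `X_w h (x) = ∫₀^∞ h(x + t w) dt`. -/
def Xbeam (w : ℝ × ℝ) (h : ℝ × ℝ → ℝ) (x : ℝ × ℝ) : ℝ :=
  ∫ t in Set.Ioi (0 : ℝ), h (x + t • w)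

/-- The k-th moment divergent beam transform `X_w^k h (x) = ∫₀^∞ t^k h(x + t w) dt`. -/
def Xmom (k : ℕ) (w : ℝ × ℝ) (h : ℝ × ℝ → ℝ) (x : ℝ × ℝ) : ℝ :=
  ∫ t in Set.Ioi (0 : ℝ), t ^ k * h (x + t • w)

/-- The directional derivative `D_w h = w ⋅ ∇h`. -/
def Dir (w : ℝ × ℝ) (h : ℝ × ℝ → ℝ) (x : ℝ × ℝ) : ℝ :=
  fderiv ℝ h x w

/-- Support contained in the open unit disc `D1`. -/
def SuppInDisc (h : ℝ × ℝ → ℝ) : Prop :=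
  ∀ x : ℝ × ℝ, 1 ≤ x.1 ^ 2 + x.2 ^ 2 → h x = 0

/-- The longitudinal V-line transform. -/
def VlineL (u1 u2 : ℝ) (f11 f12 f22 : ℝ × ℝ → ℝ) : ℝ × ℝ → ℝ :=
  Xbeam (u1, u2) (fun y => u1 ^ 2 * f11 y + 2 * u1 * u2 * f12 y + u2 ^ 2 * f22 y)
    + Xbeam (-u1, u2) (fun y => u1 ^ 2 * f11 y - 2 * u1 * u2 * f12 y + u2 ^ 2 * f22 y)

/-- The transverse V-line transform. -/
def VlineT (u1 u2 : ℝ) (f11 f12 f22 : ℝ × ℝ → ℝ) : ℝ × ℝ → ℝ :=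
  Xbeam (u1, u2) (fun y => u2 ^ 2 * f11 y - 2 * u1 * u2 * f12 y + u1 ^ 2 * f22 y)
    + Xbeam (-u1, u2) (fun y => u2 ^ 2 * f11 y + 2 * u1 * u2 * f12 y + u1 ^ 2 * f22 y)

/-- The mixed V-line transform. -/
def VlineM (u1 u2 : ℝ) (f11 f12 f22 : ℝ × ℝ → ℝ) : ℝ × ℝ → ℝ :=
  Xbeam (u1, u2) (fun y => -(u1 * u2) * f11 y + (u1 ^ 2 - u2 ^ 2) * f12 y + u1 * u2 * f22 y)
    + Xbeam (-u1, u2) (fun y => u1 * u2 * f11 y + (u1 ^ 2 - u2 ^ 2) * f12 y - u1 * u2 * f22 y)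

/-- The k-th moment longitudinal V-line transform. -/
def VlineLk (k : ℕ) (u1 u2 : ℝ) (f11 f12 f22 : ℝ × ℝ → ℝ) : ℝ × ℝ → ℝ :=
  Xmom k (u1, u2) (fun y => u1 ^ 2 * f11 y + 2 * u1 * u2 * f12 y + u2 ^ 2 * f22 y)
    + Xmom k (-u1, u2) (fun y => u1 ^ 2 * f11 y - 2 * u1 * u2 * f12 y + u2 ^ 2 * f22 y)

/-- The k-th moment transverse V-line transform. -/
def VlineTk (k : ℕ) (u1 u2 : ℝ) (f11 f12 f22 : ℝ × ℝ → ℝ) : ℝ × ℝ → ℝ :=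
  Xmom k (u1, u2) (fun y => u2 ^ 2 * f11 y - 2 * u1 * u2 * f12 y + u1 ^ 2 * f22 y)
    + Xmom k (-u1, u2) (fun y => u2 ^ 2 * f11 y + 2 * u1 * u2 * f12 y + u1 ^ 2 * f22 y)

/-- The k-th moment mixed V-line transform. -/
def VlineMk (k : ℕ) (u1 u2 : ℝ) (f11 f12 f22 : ℝ × ℝ → ℝ) : ℝ × ℝ → ℝ :=
  Xmom k (u1, u2) (fun y => -(u1 * u2) * f11 y + (u1 ^ 2 - u2 ^ 2) * f12 y + u1 * u2 * f22 y)
    + Xmom k (-u1, u2) (fun y => u1 * u2 * f11 y + (u1 ^ 2 - u2 ^ 2) * f12 y - u1 * u2 * f22 y)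

/-!
Write `X_w^k` for `Xmom k w` and `D_w` for `Dir w`. On `C¹` functions with compact support,
`D_d X_w^k = X_w^k D_d`, `X_w^0 D_w h = -h` and `X_w^1 D_w h = -X_w^0 h`; in particular `X_w^0`
and `D_w` are injective for `w ≠ 0`.

With `F = ⟨f u, u⟩` and `G = ⟨f v, v⟩` the hypotheses on `L⁰f` and `L¹f` read
`X_u^0 F + X_v^0 G = 0` and `X_u^1 F + X_v^1 G = 0`. Differentiating along `u` and then along `v`
gives `X_u^0 (D_v F) = -F = X_u^0 (D_u F)`, so `X_u^0 (D_{u-v} F) = 0`, hence `D_{u-v} F = 0` and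
`F = 0`, and then `G = 0`. This leaves `f12 = 0` and `u1² f11 + u2² f22 = 0`, which turn `Mf = 0`
into `X_u^0 f11 = X_v^0 f11`; differentiating along `v` gives `X_u^0 (D_v f11) = -f11`, and the
same argument shows `f11 = 0`.
-/

open Set Metric Filter

section Ray

variable {β : Type*} {w : ℝ × ℝ}

theorem HasCompactSupport.comp_ray [Zero β] {f : ℝ × ℝ → β} (hf : HasCompactSupport f)
    (hw : w ≠ 0) (x : ℝ × ℝ) : HasCompactSupport fun t : ℝ => f (x + t • w) :=
  hf.comp_isClosedEmbedding ((Homeomorph.addLeft x).isClosedEmbedding.comp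
    (isClosedEmbedding_smul_left hw))

theorem HasCompactSupport.exists_forall_ball_ray_eq_zero [Zero β] {f : ℝ × ℝ → β}
    (hf : HasCompactSupport f) (hw : w ≠ 0) (x₀ : ℝ × ℝ) :
    ∃ T : ℝ, ∀ x ∈ ball x₀ 1, ∀ t, T ≤ t → f (x + t • w) = 0 := by
  obtain ⟨R, hR⟩ := hf.isCompact.isBounded.subset_closedBall 0
  have hw' : 0 < ‖w‖ := norm_pos_iff.2 hw
  refine ⟨(R + ‖x₀‖ + 1) / ‖w‖, fun x hx t ht => image_eq_zero_of_notMem_tsupport fun hmem => ?_⟩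
  have hRt : R + ‖x₀‖ + 1 ≤ t * ‖w‖ := (div_le_iff₀ hw').1 ht
  have hx : ‖x‖ < ‖x₀‖ + 1 := by
    have := norm_le_norm_add_norm_sub' x x₀
    rw [mem_ball, dist_eq_norm] at hx
    linarith
  have hle : ‖x + t • w‖ ≤ R := by simpa using hR hmem
  have : t * ‖w‖ ≤ ‖x + t • w‖ + ‖x‖ := by
    calc t * ‖w‖ ≤ ‖t • w‖ := by rw [norm_smul]; gcongr; exact Real.le_norm_self t
      _ = ‖(x + t • w) - x‖ := by rw [add_sub_cancel_left]
      _ ≤ ‖x + t • w‖ + ‖x‖ := norm_sub_le _ _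
  linarith

theorem integrableOn_Ioi_pow_smul_comp_ray {E : Type*} [NormedAddCommGroup E] [NormedSpace ℝ E]
    {f : ℝ × ℝ → E} (hf : Continuous f) (hcs : HasCompactSupport f) (hw : w ≠ 0) (k : ℕ)
    (x : ℝ × ℝ) : IntegrableOn (fun t : ℝ => t ^ k • f (x + t • w)) (Ioi 0) :=
  ((continuous_pow k).smul (hf.comp (by fun_prop))).integrable_of_hasCompactSupport
    ((hcs.comp_ray hw x).smul_left (f := fun t : ℝ => t ^ k)) |>.integrableOn

end Ray

section Transform

variable {h : ℝ × ℝ → ℝ} {w : ℝ × ℝ}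

theorem hasFDerivAt_xmom (hh : ContDiff ℝ 1 h) (hcs : HasCompactSupport h) (hw : w ≠ 0)
    (k : ℕ) (x₀ : ℝ × ℝ) :
    HasFDerivAt (Xmom k w h) (∫ t in Ioi (0 : ℝ), t ^ k • fderiv ℝ h (x₀ + t • w)) x₀ := by
  have hh' : Continuous (fderiv ℝ h) := hh.continuous_fderiv one_ne_zero
  obtain ⟨C, hC⟩ := hh'.bounded_above_of_compact_support (hcs.fderiv (𝕜 := ℝ))
  have hC₀ : 0 ≤ C := (norm_nonneg _).trans (hC 0)
  obtain ⟨T, hT⟩ := (hcs.fderiv (𝕜 := ℝ)).exists_forall_ball_ray_eq_zero hw x₀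
  refine hasFDerivAt_integral_of_dominated_of_fderiv_le (ball_mem_nhds x₀ one_pos)
    (F := fun x t => t ^ k * h (x + t • w)) (F' := fun x t => t ^ k • fderiv ℝ h (x + t • w))
    (bound := (Iic T).indicator fun t => |t| ^ k * C)
    (Eventually.of_forall fun x =>
      (integrableOn_Ioi_pow_smul_comp_ray hh.continuous hcs hw k x).1)
    (integrableOn_Ioi_pow_smul_comp_ray hh.continuous hcs hw k x₀)
    (integrableOn_Ioi_pow_smul_comp_ray hh' (hcs.fderiv (𝕜 := ℝ)) hw k x₀).1
    (Eventually.of_forall fun t x hx => ?_) ?_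
    (Eventually.of_forall fun t x _ => ?_)
  · rcases le_or_gt T t with htT | htT
    · rw [hT x hx t htT, smul_zero, norm_zero]
      exact indicator_nonneg (fun _ _ => by positivity) t
    · rw [indicator_of_mem (mem_Iic.2 htT.le), norm_smul, norm_pow, Real.norm_eq_abs]
      gcongr
      exact hC _
  · rw [integrable_indicator_iff measurableSet_Iic, IntegrableOn,
      Measure.restrict_restrict measurableSet_Iic]
    exact ((continuous_abs.pow k).mul continuous_const).integrableOn_Icc.mono_set
      fun t ht => ⟨ht.2.le, ht.1⟩
  · simpa using (((hh.differentiable one_ne_zero _).hasFDerivAt.comp x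
      ((hasFDerivAt_id x).add_const (t • w))).const_mul (t ^ k))

theorem contDiff_dir {m n : WithTop ℕ∞} (hh : ContDiff ℝ n h) (hmn : m + 1 ≤ n) (d : ℝ × ℝ) :
    ContDiff ℝ m (Dir d h) :=
  (hh.fderiv_right hmn).clm_apply contDiff_const

theorem HasCompactSupport.dir (hcs : HasCompactSupport h) (d : ℝ × ℝ) :
    HasCompactSupport (Dir d h) :=
  hcs.fderiv_apply (𝕜 := ℝ) d

theorem dir_xmom (hh : ContDiff ℝ 1 h) (hcs : HasCompactSupport h) (hw : w ≠ 0) (k : ℕ)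
    (d : ℝ × ℝ) : Dir d (Xmom k w h) = Xmom k w (Dir d h) := by
  ext x
  rw [Dir, (hasFDerivAt_xmom hh hcs hw k x).fderiv, ContinuousLinearMap.integral_apply
    (integrableOn_Ioi_pow_smul_comp_ray (hh.continuous_fderiv one_ne_zero)
      (hcs.fderiv (𝕜 := ℝ)) hw k x)]
  rfl

theorem hasDerivAt_comp_ray (hh : Differentiable ℝ h) (x : ℝ × ℝ) (t : ℝ) :
    HasDerivAt (fun s : ℝ => h (x + s • w)) (Dir w h (x + t • w)) t := by
  have := (hh _).hasFDerivAt.comp_hasDerivAt t (((hasDerivAt_id t).smul_const w).const_add x)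
  simp only [id, one_smul, Function.comp_def] at this
  exact this

theorem xmom_zero_dir_self (hh : ContDiff ℝ 1 h) (hcs : HasCompactSupport h) (hw : w ≠ 0) :
    Xmom 0 w (Dir w h) = -h := by
  ext x
  have hray : ContDiff ℝ 1 fun t : ℝ => h (x + t • w) := hh.comp (by fun_prop)
  simpa [Xmom, (hasDerivAt_comp_ray (hh.differentiable one_ne_zero) x _).deriv] using
    (hcs.comp_ray hw x).integral_Ioi_deriv_eq hray 0

theorem xmom_succ_dir_self (hh : ContDiff ℝ 1 h) (hcs : HasCompactSupport h) (hw : w ≠ 0)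
    (k : ℕ) (x : ℝ × ℝ) : Xmom (k + 1) w (Dir w h) x = -(k + 1) * Xmom k w h x := by
  have hφ : ∀ t : ℝ, HasDerivAt (fun t => t ^ (k + 1) * h (x + t • w))
      ((k + 1) * (t ^ k * h (x + t • w)) + t ^ (k + 1) * Dir w h (x + t • w)) t := fun t => by
    simpa [mul_assoc] using
      (hasDerivAt_pow (k + 1) t).fun_mul (hasDerivAt_comp_ray (hh.differentiable one_ne_zero) x t)
  have hφc : ContDiff ℝ 1 fun t : ℝ => t ^ (k + 1) * h (x + t • w) :=
    (contDiff_id.pow _).mul (hh.comp (by fun_prop))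
  have hboundary := ((hcs.comp_ray hw x).mul_left (f := fun t : ℝ => t ^ (k + 1))
    ).integral_Ioi_deriv_eq hφc 0
  simp only [fun t => (hφ t).deriv, zero_pow (Nat.succ_ne_zero k), zero_mul, neg_zero]
    at hboundary
  have hint {f : ℝ × ℝ → ℝ} (hf : Continuous f) (hfc : HasCompactSupport f) (j : ℕ) :
      IntegrableOn (fun t : ℝ => t ^ j * f (x + t • w)) (Ioi 0) := by
    simpa only [smul_eq_mul] using integrableOn_Ioi_pow_smul_comp_ray hf hfc hw j x
  rw [integral_add ((hint hh.continuous hcs k).const_mul _)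
    (hint (contDiff_dir (m := 0) hh (by simp) w).continuous (hcs.dir w) (k + 1)),
    integral_const_mul] at hboundary
  simp only [Xmom]
  linarith

theorem dir_neg (d : ℝ × ℝ) (f : ℝ × ℝ → ℝ) : Dir d (-f) = -Dir d f := by
  ext x
  simp [Dir, fderiv_neg]

theorem dir_sub_left (a b : ℝ × ℝ) (f : ℝ × ℝ → ℝ) : Dir (a - b) f = Dir a f - Dir b f := by
  ext x
  simp [Dir]

theorem dir_fun_zero (d : ℝ × ℝ) : Dir d (0 : ℝ × ℝ → ℝ) = 0 := by
  ext x
  simp [Dir]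

theorem xmom_fun_zero (k : ℕ) (w : ℝ × ℝ) : Xmom k w 0 = 0 := by
  ext x
  simp [Xmom]

theorem xmom_const_mul (k : ℕ) (w : ℝ × ℝ) (a : ℝ) (f : ℝ × ℝ → ℝ) (x : ℝ × ℝ) :
    Xmom k w (fun y => a * f y) x = a * Xmom k w f x := by
  simp only [Xmom, mul_left_comm _ a, integral_const_mul]

theorem xmom_sub {f g : ℝ × ℝ → ℝ} (hf : Continuous f) (hfc : HasCompactSupport f)
    (hg : Continuous g) (hgc : HasCompactSupport g) (hw : w ≠ 0) (k : ℕ) :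
    Xmom k w (f - g) = Xmom k w f - Xmom k w g := by
  ext x
  simpa [Xmom, mul_sub] using integral_sub (integrableOn_Ioi_pow_smul_comp_ray hf hfc hw k x)
    (integrableOn_Ioi_pow_smul_comp_ray hg hgc hw k x)

theorem xbeam_eq_xmom_zero (w : ℝ × ℝ) (f : ℝ × ℝ → ℝ) : Xbeam w f = Xmom 0 w f := by
  ext x
  simp [Xbeam, Xmom]

theorem eq_zero_of_xmom_zero_eq_zero (hh : ContDiff ℝ 1 h) (hcs : HasCompactSupport h)
    (hw : w ≠ 0) (h₀ : Xmom 0 w h = 0) : h = 0 := by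
  simpa [h₀, dir_fun_zero, xmom_zero_dir_self hh hcs hw] using dir_xmom hh hcs hw 0 w

theorem eq_zero_of_dir_eq_zero (hh : ContDiff ℝ 1 h) (hcs : HasCompactSupport h) (hw : w ≠ 0)
    (h₀ : Dir w h = 0) : h = 0 := by
  simpa [h₀, xmom_fun_zero] using xmom_zero_dir_self hh hcs hw

end Transform

section Injectivity

variable {u v : ℝ × ℝ} {F G H : ℝ × ℝ → ℝ}

theorem eq_zero_of_xmom_zero_dir_eq_neg (hH : ContDiff ℝ 2 H) (hcs : HasCompactSupport H)
    (hu : u ≠ 0) (huv : u ≠ v) (h : Xmom 0 u (Dir v H) = -H) : H = 0 := by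
  have hH₁ : ContDiff ℝ 1 H := hH.of_le one_le_two
  have hK : Xmom 0 u (Dir (u - v) H) = 0 := by
    rw [dir_sub_left, xmom_sub (contDiff_dir (m := 0) hH₁ (by simp) u).continuous (hcs.dir u)
      (contDiff_dir (m := 0) hH₁ (by simp) v).continuous (hcs.dir v) hu,
      xmom_zero_dir_self hH₁ hcs hu, h, sub_self]
  exact eq_zero_of_dir_eq_zero hH₁ hcs (sub_ne_zero.2 huv)
    (eq_zero_of_xmom_zero_eq_zero (contDiff_dir hH (by norm_num) _) (hcs.dir _) hu hK)

theorem eq_zero_of_xmom_add_xmom_eq_zero (hF : ContDiff ℝ 2 F) (hFc : HasCompactSupport F)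
    (hG : ContDiff ℝ 2 G) (hGc : HasCompactSupport G) (hu : u ≠ 0) (hv : v ≠ 0) (huv : u ≠ v)
    (h₀ : ∀ x, Xmom 0 u F x + Xmom 0 v G x = 0) (h₁ : ∀ x, Xmom 1 u F x + Xmom 1 v G x = 0) :
    F = 0 ∧ G = 0 := by
  have hF₁ : ContDiff ℝ 1 F := hF.of_le one_le_two
  have hG₁ : ContDiff ℝ 1 G := hG.of_le one_le_two
  have hDuG : ContDiff ℝ 1 (Dir u G) := contDiff_dir hG (by norm_num) u
  have e₀ : Xmom 0 u F = -Xmom 0 v G := funext fun x => eq_neg_of_add_eq_zero_left (h₀ x)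
  have e₁ : Xmom 1 u F = -Xmom 1 v G := funext fun x => eq_neg_of_add_eq_zero_left (h₁ x)
  have hF_eq : F = Xmom 0 v (Dir u G) := by
    simpa [dir_xmom hF₁ hFc hu, dir_xmom hG₁ hGc hv, dir_neg, xmom_zero_dir_self hF₁ hFc hu]
      using congrArg (Dir u) e₀
  have hXuF : Xmom 0 u F = Xmom 1 v (Dir u G) := by
    have := congrArg (Dir u) e₁
    rw [dir_neg, dir_xmom hF₁ hFc hu, dir_xmom hG₁ hGc hv] at this
    ext x
    simpa using (xmom_succ_dir_self hF₁ hFc hu 0 x).symm.trans (congrFun this x)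
  have hF0 : F = 0 := by
    refine eq_zero_of_xmom_zero_dir_eq_neg hF hFc hu huv ?_
    ext x
    have := congrFun (congrArg (Dir v) hXuF) x
    rw [dir_xmom hF₁ hFc hu, dir_xmom hDuG (hGc.dir u) hv, xmom_succ_dir_self hDuG (hGc.dir u) hv,
      ← hF_eq] at this
    simpa using this
  refine ⟨hF0, eq_zero_of_xmom_zero_eq_zero hG₁ hGc hv ?_⟩
  rw [← neg_eq_zero, ← e₀, hF0, xmom_fun_zero]

theorem eq_zero_of_xmom_zero_eq_xmom_zero (hH : ContDiff ℝ 2 H) (hcs : HasCompactSupport H)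
    (hu : u ≠ 0) (hv : v ≠ 0) (huv : u ≠ v) (h : Xmom 0 u H = Xmom 0 v H) : H = 0 := by
  have hH₁ : ContDiff ℝ 1 H := hH.of_le one_le_two
  refine eq_zero_of_xmom_zero_dir_eq_neg hH hcs hu huv ?_
  simpa [dir_xmom hH₁ hcs hu, dir_xmom hH₁ hcs hv, xmom_zero_dir_self hH₁ hcs hv] using
    congrArg (Dir v) h

end Injectivity

theorem SuppInDisc.hasCompactSupport {h : ℝ × ℝ → ℝ} (hh : SuppInDisc h) :
    HasCompactSupport h := by
  refine HasCompactSupport.intro (isCompact_closedBall (0 : ℝ × ℝ) 1) fun x hx => hh x ?_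
  rw [mem_closedBall_zero_iff, not_le, Prod.norm_def, lt_max_iff, Real.norm_eq_abs,
    Real.norm_eq_abs, ← one_lt_sq_iff_one_lt_abs, ← one_lt_sq_iff_one_lt_abs] at hx
  rcases hx with hx | hx <;> nlinarith [sq_nonneg x.1, sq_nonneg x.2]

section Tensor

variable {u1 u2 : ℝ} {f11 f12 f22 : ℝ × ℝ → ℝ}

theorem eq_zero_and_diag_eq_zero_of_longitudinal_weights_eq_zero {a b d : ℝ} (hu1 : 0 < u1)
    (hu2 : 0 < u2)
    (hLu : u1 ^ 2 * a + 2 * u1 * u2 * b + u2 ^ 2 * d = 0)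
    (hLv : u1 ^ 2 * a - 2 * u1 * u2 * b + u2 ^ 2 * d = 0) :
    b = 0 ∧ u1 ^ 2 * a + u2 ^ 2 * d = 0 := by
  have hb : (4 * u1 * u2) * b = 0 := by linear_combination hLu - hLv
  have hb₀ : b = 0 := (mul_eq_zero.1 hb).resolve_left (by positivity)
  exact ⟨hb₀, by linear_combination hLu - 2 * u1 * u2 * hb₀⟩

theorem xmom_zero_eq_of_vlineM_eq_zero (hu1 : 0 < u1) (hu2 : 0 < u2) (hf12 : ∀ y, f12 y = 0)
    (hf : ∀ y, u1 ^ 2 * f11 y + u2 ^ 2 * f22 y = 0)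
    (hM : ∀ x, VlineM u1 u2 f11 f12 f22 x = 0) :
    Xmom 0 (u1, u2) f11 = Xmom 0 (-u1, u2) f11 := by
  have hc : u1 * (u1 ^ 2 + u2 ^ 2) / u2 ≠ 0 := by positivity
  have hMu : (fun y => -(u1 * u2) * f11 y + (u1 ^ 2 - u2 ^ 2) * f12 y + u1 * u2 * f22 y)
      = fun y => -(u1 * (u1 ^ 2 + u2 ^ 2) / u2) * f11 y := by
    ext y
    field_simp
    linear_combination (u1 ^ 2 - u2 ^ 2) * u2 * hf12 y + u1 * hf y
  have hMv : (fun y => u1 * u2 * f11 y + (u1 ^ 2 - u2 ^ 2) * f12 y - u1 * u2 * f22 y)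
      = fun y => u1 * (u1 ^ 2 + u2 ^ 2) / u2 * f11 y := by
    ext y
    field_simp
    linear_combination (u1 ^ 2 - u2 ^ 2) * u2 * hf12 y - u1 * hf y
  ext x
  have h := hM x
  simp only [VlineM, hMu, hMv, xbeam_eq_xmom_zero, Pi.add_apply, xmom_const_mul] at h
  exact mul_left_cancel₀ hc (by linear_combination -h)

end Tensor

theorem injectivity_L_L1_M_general
    (u1 u2 : ℝ) (hu1 : 0 < u1) (hu2 : 0 < u2)
    (f11 f12 f22 : ℝ × ℝ → ℝ)
    (h11 : ContDiff ℝ 2 f11) (h12 : ContDiff ℝ 2 f12) (h22 : ContDiff ℝ 2 f22)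
    (s11 : SuppInDisc f11) (s12 : SuppInDisc f12) (s22 : SuppInDisc f22)
    (hL0 : ∀ x : ℝ × ℝ, VlineLk 0 u1 u2 f11 f12 f22 x = 0)
    (hL1 : ∀ x : ℝ × ℝ, VlineLk 1 u1 u2 f11 f12 f22 x = 0)
    (hM : ∀ x : ℝ × ℝ, VlineM u1 u2 f11 f12 f22 x = 0) :
    ∀ x : ℝ × ℝ, f11 x = 0 ∧ f12 x = 0 ∧ f22 x = 0 := by
  have hu : ((u1, u2) : ℝ × ℝ) ≠ 0 := by simp [hu1.ne']
  have hv : ((-u1, u2) : ℝ × ℝ) ≠ 0 := by simp [hu1.ne']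
  have huv : ((u1, u2) : ℝ × ℝ) ≠ (-u1, u2) := by simp; linarith
  have hcs {g : ℝ × ℝ → ℝ} (hg : ∀ y, f11 y = 0 → f12 y = 0 → f22 y = 0 → g y = 0) :
      HasCompactSupport g :=
    SuppInDisc.hasCompactSupport fun y hy => hg y (s11 y hy) (s12 y hy) (s22 y hy)
  obtain ⟨hF, hG⟩ := eq_zero_of_xmom_add_xmom_eq_zero
    (F := fun y => u1 ^ 2 * f11 y + 2 * u1 * u2 * f12 y + u2 ^ 2 * f22 y)
    (G := fun y => u1 ^ 2 * f11 y - 2 * u1 * u2 * f12 y + u2 ^ 2 * f22 y)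
    (by fun_prop) (hcs fun y h₁ h₂ h₃ => by simp [h₁, h₂, h₃])
    (by fun_prop) (hcs fun y h₁ h₂ h₃ => by simp [h₁, h₂, h₃]) hu hv huv hL0 hL1
  have hf (y : ℝ × ℝ) :=
    eq_zero_and_diag_eq_zero_of_longitudinal_weights_eq_zero hu1 hu2 (congrFun hF y) (congrFun hG y)
  have hf11 := eq_zero_of_xmom_zero_eq_xmom_zero h11 s11.hasCompactSupport hu hv huv
    (xmom_zero_eq_of_vlineM_eq_zero hu1 hu2 (fun y => (hf y).1) (fun y => (hf y).2) hM)
  intro x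
  have hf22 := (hf x).2
  rw [congrFun hf11 x] at hf22
  exact ⟨congrFun hf11 x, (hf x).1, by simpa [hu2.ne'] using hf22⟩

/-- a symmetric 2-tensor field is uniquely determined by `Lf`, `L¹f`,
and `Mf`. -/
theorem injectivity_L_L1_M
    (u1 u2 : ℝ) (hu : u1 ^ 2 + u2 ^ 2 = 1) (hu1 : 0 < u1) (hu2 : 0 < u2)
    (f11 f12 f22 : ℝ × ℝ → ℝ)
    (h11 : ContDiff ℝ 2 f11) (h12 : ContDiff ℝ 2 f12) (h22 : ContDiff ℝ 2 f22)
    (s11 : SuppInDisc f11) (s12 : SuppInDisc f12) (s22 : SuppInDisc f22)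
    (hL0 : ∀ x : ℝ × ℝ, VlineLk 0 u1 u2 f11 f12 f22 x = 0)
    (hL1 : ∀ x : ℝ × ℝ, VlineLk 1 u1 u2 f11 f12 f22 x = 0)
    (hM : ∀ x : ℝ × ℝ, VlineM u1 u2 f11 f12 f22 x = 0) :
    ∀ x : ℝ × ℝ, f11 x = 0 ∧ f12 x = 0 ∧ f22 x = 0 :=
  injectivity_L_L1_M_general u1 u2 hu1 hu2 f11 f12 f22 h11 h12 h22 s11 s12 s22 hL0 hL1 hM
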